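/- arXiv:2109.11310 — 3 statements merged into one kernel-verified Lean document; each statement's English description precedes it below -/
import Mathlib

section
/- Let t ≥ 2 and n ≥ 1 be integers, let ω ∈ ℂ be a primitive t-th root of unity, and let λ be a partition of length at most tn. Suppose it is NOT the case that both n_0(λ,tn) = n and n_i(λ,tn) + n_{t−i}(λ,tn) = 2n for all 1 ≤ i ≤ ⌊t/2⌋ (equivalently, the t-core of λ is not an orthogonal t-core). Then for every choice of nonzero x_1,…,x_n ∈ ℂ, the tn × tn matrix M, whose rows are indexed by pairs (p,i) with 0 ≤ p ≤ t−1, 1 ≤ i ≤ n, whose columns are indexed by 1 ≤ j ≤ tn, and whose entries are M_{(p,i),j} = (ω^p x_i)^{β_j(λ)} + (ω^p x_i)^{−β_j(λ)}, has determinant 0. In particular the even orthogonal character oe_λ evaluated at the tn numbers ω^p x_i vanishes. -/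
open BigOperators

/-- The beta set of a partition `lam` of length at most `m`:
`β_j(λ) = λ_j + m - j` (0-indexed: `β j = λ j + (m - 1 - j)`). -/
def betaSet (m : ℕ) (lam : Fin m → ℕ) (j : Fin m) : ℕ :=
  lam j + (m - 1 - (j : ℕ))

/-- `n_i(λ, m)`: the number of entries of the beta set congruent to `i` mod `t`. -/
def ncount (t m : ℕ) (lam : Fin m → ℕ) (i : ℕ) : ℕ :=
  (Finset.univ.filter fun j : Fin m => betaSet m lam j % t = i).card

/-- The even orthogonal character of `mu` evaluated at nonzero complex numbers `y`;
the denominator carries the extra factor `1 + δ_{μ_N, 0}`. -/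
noncomputable def oeChar (N : ℕ) (mu : Fin N → ℕ) (y : Fin N → ℂ) : ℂ :=
  Matrix.det (Matrix.of fun i j : Fin N =>
      y i ^ ((betaSet N mu j : ℤ)) + y i ^ (-(betaSet N mu j : ℤ))) /
    ((if h : 0 < N then (if mu ⟨N - 1, Nat.sub_lt h Nat.one_pos⟩ = 0 then 2 else 1) else 1) *
      Matrix.det (Matrix.of fun i j : Fin N =>
        y i ^ (((N - 1 - (j : ℕ) : ℕ) : ℤ)) + y i ^ (-((N - 1 - (j : ℕ) : ℕ) : ℤ))))

/-!
Since `ω ^ t = 1`, the entry `(ω^p x)^β + (ω^p x)^(-β)` equals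
`ω^(p c) x^β + ω^(-p c) x^(-β)` with `c = β mod t`. Hence every column whose beta number
lies in the residue pair `{c, -c}` is a combination of the vectors `r ↦ [k r = i] ω^(p r d)`
with `i ∈ Fin n` and `d ∈ {c, -c}`: at most `2n` vectors, and only `n` when `c ≡ -c`.
Summed over all residues `c`, the numbers `n_c + n_{-c}` give `2tn`; unless each of them
equals `2n`, which is the orthogonal-core condition, some pair `{c, -c}` carries more columns
than its span has dimensions, so the columns are linearly dependent.
-/

open Finset

theorem Matrix.det_eq_zero_of_card_lt_of_col_mem_span {K m σ : Type*} [Field K] [Fintype m]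
    [DecidableEq m] [Fintype σ] (M : Matrix m m K) (v : σ → m → K) (G : Finset m)
    (hcard : Fintype.card σ < #G) (hG : ∀ j ∈ G, M.col j ∈ Submodule.span K (Set.range v)) :
    M.det = 0 := by
  by_contra hdet
  have hli : LinearIndependent K fun j : G => M.col j :=
    (Matrix.linearIndependent_cols_iff_isUnit.2
      (M.isUnit_iff_isUnit_det.2 (Ne.isUnit hdet))).comp _ Subtype.val_injective
  have hspan :
      Submodule.span K (Set.range fun j : G => M.col j) ≤ Submodule.span K (Set.range v) :=
    Submodule.span_le.2 <| Set.range_subset_iff.2 fun j => hG j j.2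
  have := (Submodule.finrank_mono hspan).trans (finrank_range_le_card v)
  rw [finrank_span_eq_card hli, Fintype.card_coe] at this
  omega

/-- The representative in `[0, t)` of `-b` modulo `t`. -/
def negMod (t b : ℕ) : ℕ := (t - b % t) % t

section negMod

variable {t : ℕ}

@[simp]
theorem negMod_zero : negMod t 0 = 0 := by simp [negMod]

theorem negMod_mod (b : ℕ) : negMod t (b % t) = negMod t b := by simp [negMod]

theorem negMod_lt (ht : 0 < t) (b : ℕ) : negMod t b < t := Nat.mod_lt _ ht

theorem negMod_eq_sub {i : ℕ} (hi : 0 < i) (hit : i < t) : negMod t i = t - i := by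
  rw [negMod, Nat.mod_eq_of_lt hit, Nat.mod_eq_of_lt (by omega)]

theorem negMod_negMod (ht : 0 < t) (b : ℕ) : negMod t (negMod t b) = b % t := by
  have hlt := Nat.mod_lt b ht
  rw [← negMod_mod b]
  rcases Nat.eq_zero_or_pos (b % t) with h | h
  · simp [h]
  · rw [negMod_eq_sub h hlt, negMod_eq_sub (by omega) (by omega)]
    omega

theorem dvd_add_negMod (ht : 0 < t) (b : ℕ) : t ∣ b + negMod t b := by
  rcases Nat.eq_zero_or_pos (b % t) with h | h
  · rw [← negMod_mod, h, negMod_zero, add_zero]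
    exact Nat.dvd_of_mod_eq_zero h
  · rw [← negMod_mod, negMod_eq_sub h (Nat.mod_lt _ ht)]
    exact ⟨b / t + 1, by have := Nat.div_add_mod b t; have := Nat.mod_lt b ht; grind⟩

theorem negMod_mem_pair (ht : 0 < t) {b c : ℕ} (hc : c < t)
    (hb : b % t ∈ ({c, negMod t c} : Finset ℕ)) :
    negMod t b ∈ ({c, negMod t c} : Finset ℕ) := by
  rw [← negMod_mod b]
  rcases mem_insert.1 hb with h | h
  · rw [h]
    exact mem_insert_of_mem (mem_singleton_self _)
  · rw [mem_singleton.1 h, negMod_negMod ht, Nat.mod_eq_of_lt hc]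
    exact mem_insert_self _ _

end negMod

section ncount

variable {t m : ℕ} (lam : Fin m → ℕ)

theorem card_filter_mod_mem_eq_sum_ncount (D : Finset ℕ) :
    #{j | betaSet m lam j % t ∈ D} = ∑ d ∈ D, ncount t m lam d := by
  rw [card_eq_sum_card_fiberwise (s := {j | betaSet m lam j % t ∈ D})
    (f := fun j => betaSet m lam j % t) fun j hj => (mem_filter.1 hj).2]
  refine sum_congr rfl fun d hd => congrArg card ?_
  ext j
  simp only [mem_filter, mem_univ, true_and, and_iff_right_iff_imp]
  rintro rfl
  exact hd

theorem sum_ncount (ht : 0 < t) : ∑ c ∈ range t, ncount t m lam c = m := by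
  rw [← card_filter_mod_mem_eq_sum_ncount]
  simp [Nat.mod_lt _ ht]

theorem sum_ncount_negMod (ht : 0 < t) : ∑ c ∈ range t, ncount t m lam (negMod t c) = m := by
  conv_rhs => rw [← sum_ncount lam ht]
  refine sum_nbij' (negMod t) (negMod t) (fun c _ => ?_) (fun c _ => ?_) (fun c hc => ?_)
    (fun c hc => ?_) fun _ _ => rfl <;>
    simp_all [negMod_lt ht, negMod_negMod ht, Nat.mod_eq_of_lt]

theorem card_pair_mul_lt_card_filter {n c : ℕ}
    (h : 2 * n < ncount t m lam c + ncount t m lam (negMod t c)) :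
    n * #({c, negMod t c} : Finset ℕ) <
      #{j | betaSet m lam j % t ∈ ({c, negMod t c} : Finset ℕ)} := by
  rw [card_filter_mod_mem_eq_sum_ncount]
  by_cases hc : negMod t c = c
  · simp only [hc, insert_eq_of_mem, mem_singleton, card_singleton, sum_singleton] at h ⊢
    omega
  · rw [sum_pair (Ne.symm hc), card_pair (Ne.symm hc)]
    omega

end ncount

theorem ncount_orthogonal_of_forall_le {t n : ℕ} (lam : Fin (t * n) → ℕ) (ht : 0 < t)
    (h : ∀ c < t, ncount t (t * n) lam c + ncount t (t * n) lam (negMod t c) ≤ 2 * n) :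
    ncount t (t * n) lam 0 = n ∧ ∀ i, 1 ≤ i → i ≤ t / 2 →
      ncount t (t * n) lam i + ncount t (t * n) lam (t - i) = 2 * n := by
  have heq : ∀ c ∈ range t,
      ncount t (t * n) lam c + ncount t (t * n) lam (negMod t c) = 2 * n := by
    refine (sum_eq_sum_iff_of_le fun c hc => h c (mem_range.1 hc)).1 ?_
    rw [sum_add_distrib, sum_ncount lam ht, sum_ncount_negMod lam ht, sum_const, card_range,
      smul_eq_mul]
    ring
  refine ⟨?_, fun i hi hit => ?_⟩
  · have := heq 0 (mem_range.2 ht)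
    rw [negMod_zero] at this
    omega
  · rw [← negMod_eq_sub hi (by omega)]
    exact heq i (mem_range.2 (by omega))

section twist

variable {K ι m : Type*} [Field K] [Fintype ι] [DecidableEq ι] {ω : K} {t : ℕ}

theorem inv_pow_eq_pow_negMod (hω : ω ^ t = 1) (ht : 0 < t) (b : ℕ) :
    (ω ^ b)⁻¹ = ω ^ negMod t b := by
  refine inv_eq_of_mul_eq_one_right ?_
  obtain ⟨q, hq⟩ := dvd_add_negMod ht b
  rw [← pow_add, hq, pow_mul, hω, one_pow]

theorem pow_mul_zpow_add_zpow_neg (hω : ω ^ t = 1) (ht : 0 < t) (p b : ℕ) (y : K) :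
    (ω ^ p * y) ^ (b : ℤ) + (ω ^ p * y) ^ (-(b : ℤ)) =
      ω ^ (p * (b % t)) * y ^ (b : ℤ) + ω ^ (p * negMod t b) * y ^ (-(b : ℤ)) := by
  have hpos : (ω ^ p) ^ b = ω ^ (p * (b % t)) := by
    rw [← pow_mul, mul_comm, pow_mul, pow_eq_pow_mod b hω, ← pow_mul, mul_comm]
  have hneg : (ω ^ (p * (b % t)))⁻¹ = ω ^ (p * negMod t b) := by
    rw [mul_comm, pow_mul, ← inv_pow, inv_pow_eq_pow_negMod hω ht, negMod_mod, ← pow_mul,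
      mul_comm]
  simp only [zpow_neg, zpow_natCast, mul_pow, mul_inv, hpos, hneg]

def twistVec (ω : K) (p : m → ℕ) (k : m → ι) (i : ι) (d : ℕ) : m → K :=
  fun r => if k r = i then ω ^ (p r * d) else 0

theorem twisted_col_mem_span (hω : ω ^ t = 1) (ht : 0 < t) (p : m → ℕ) (k : m → ι)
    (x : ι → K) {b : ℕ} {D : Finset ℕ} (hb : b % t ∈ D) (hb' : negMod t b ∈ D) :
    (fun r => (ω ^ p r * x (k r)) ^ (b : ℤ) + (ω ^ p r * x (k r)) ^ (-(b : ℤ))) ∈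
      Submodule.span K (Set.range fun q : ι × D => twistVec ω p k q.1 q.2) := by
  have hcol : (fun r => (ω ^ p r * x (k r)) ^ (b : ℤ) + (ω ^ p r * x (k r)) ^ (-(b : ℤ))) =
      ∑ i, x i ^ (b : ℤ) • twistVec ω p k i (b % t) +
        ∑ i, x i ^ (-(b : ℤ)) • twistVec ω p k i (negMod t b) := by
    funext r
    simp only [Finset.sum_apply, Pi.add_apply, Pi.smul_apply, smul_eq_mul, twistVec, mul_ite,
      mul_zero, Finset.sum_ite_eq, Finset.mem_univ, if_true]
    rw [pow_mul_zpow_add_zpow_neg hω ht]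
    ring
  have hmem : ∀ d (hd : d ∈ D) i,
      twistVec ω p k i d ∈
        Submodule.span K (Set.range fun q : ι × D => twistVec ω p k q.1 q.2) :=
    fun d hd i => Submodule.subset_span ⟨(i, ⟨d, hd⟩), rfl⟩
  rw [hcol]
  exact add_mem (sum_mem fun i _ => Submodule.smul_mem _ _ (hmem _ hb i))
    (sum_mem fun i _ => Submodule.smul_mem _ _ (hmem _ hb' i))

theorem det_twisted_eq_zero_of_card_lt [Fintype m] [DecidableEq m] (hω : ω ^ t = 1)
    (ht : 0 < t) (p : m → ℕ) (k : m → ι) (x : ι → K) (β : m → ℕ) (G : Finset m) (D : Finset ℕ)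
    (hD : ∀ j ∈ G, β j % t ∈ D ∧ negMod t (β j) ∈ D) (hcard : Fintype.card ι * #D < #G) :
    (Matrix.of fun r j =>
      (ω ^ p r * x (k r)) ^ (β j : ℤ) + (ω ^ p r * x (k r)) ^ (-(β j : ℤ))).det = 0 :=
  Matrix.det_eq_zero_of_card_lt_of_col_mem_span _ _ G (by simpa using hcard) fun j hj =>
    twisted_col_mem_span hω ht p k x (hD j hj).1 (hD j hj).2

end twist

theorem even_orthogonal_twisted_vanishing_general
    (t n : ℕ) (ht : 2 ≤ t)
    (ω : ℂ) (hω : IsPrimitiveRoot ω t)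
    (lam : Fin (t * n) → ℕ)
    (hcore : ¬ (ncount t (t * n) lam 0 = n ∧
        ∀ i, 1 ≤ i → i ≤ t / 2 →
          ncount t (t * n) lam i + ncount t (t * n) lam (t - i) = 2 * n))
    (x : Fin n → ℂ) :
    Matrix.det (Matrix.of fun r j : Fin (t * n) =>
        (ω ^ (((finProdFinEquiv.symm r).1 : ℕ)) * x (finProdFinEquiv.symm r).2)
            ^ ((betaSet (t * n) lam j : ℤ))
          + (ω ^ (((finProdFinEquiv.symm r).1 : ℕ)) * x (finProdFinEquiv.symm r).2)
            ^ (-(betaSet (t * n) lam j : ℤ))) = 0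
    ∧ oeChar (t * n) lam
        (fun r => ω ^ (((finProdFinEquiv.symm r).1 : ℕ)) * x (finProdFinEquiv.symm r).2)
      = 0 := by
  have ht0 : 0 < t := by omega
  obtain ⟨c, hc, hgt⟩ :
      ∃ c < t, 2 * n < ncount t (t * n) lam c + ncount t (t * n) lam (negMod t c) := by
    by_contra! hle
    exact hcore (ncount_orthogonal_of_forall_le lam ht0 hle)
  have hdet := det_twisted_eq_zero_of_card_lt hω.pow_eq_one ht0
    (fun r => ((finProdFinEquiv.symm r).1 : ℕ)) (fun r => (finProdFinEquiv.symm r).2) x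
    (betaSet (t * n) lam)
    {j | betaSet (t * n) lam j % t ∈ ({c, negMod t c} : Finset ℕ)} {c, negMod t c}
    (fun j hj => ⟨(mem_filter.1 hj).2, negMod_mem_pair ht0 hc (mem_filter.1 hj).2⟩)
    (by simpa using card_pair_mul_lt_card_filter lam hgt)
  exact ⟨hdet, by rw [oeChar, hdet, zero_div]⟩

/-- If the `t`-core of `λ` is not an orthogonal `t`-core, i.e. it is not the case that
`n_0(λ,tn) = n` and `n_i + n_{t-i} = 2n` for all `1 ≤ i ≤ ⌊t/2⌋`, then the `tn × tn`
matrix with entries `(ω^p x_i)^{β_j(λ)} + (ω^p x_i)^{-β_j(λ)}` has determinant `0`;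
in particular `oe_λ(X, ωX, …, ω^{t-1}X) = 0`. -/
theorem even_orthogonal_twisted_vanishing
    (t n : ℕ) (ht : 2 ≤ t) (hn : 1 ≤ n)
    (ω : ℂ) (hω : IsPrimitiveRoot ω t)
    (lam : Fin (t * n) → ℕ)
    (hanti : ∀ j k : Fin (t * n), j ≤ k → lam k ≤ lam j)
    (hcore : ¬ (ncount t (t * n) lam 0 = n ∧
        ∀ i, 1 ≤ i → i ≤ t / 2 →
          ncount t (t * n) lam i + ncount t (t * n) lam (t - i) = 2 * n))
    (x : Fin n → ℂ) (hx0 : ∀ i, x i ≠ 0) :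
    Matrix.det (Matrix.of fun r j : Fin (t * n) =>
        (ω ^ (((finProdFinEquiv.symm r).1 : ℕ)) * x (finProdFinEquiv.symm r).2)
            ^ ((betaSet (t * n) lam j : ℤ))
          + (ω ^ (((finProdFinEquiv.symm r).1 : ℕ)) * x (finProdFinEquiv.symm r).2)
            ^ (-(betaSet (t * n) lam j : ℤ))) = 0
    ∧ oeChar (t * n) lam
        (fun r => ω ^ (((finProdFinEquiv.symm r).1 : ℕ)) * x (finProdFinEquiv.symm r).2)
      = 0 :=
  even_orthogonal_twisted_vanishing_general t n ht ω hω lam hcore x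
end

section
/- Let t ≥ 2, n ≥ 1 and z be integers with 0 ≤ z ≤ t − 2, and let λ be a t-core of length at most tn. Then λ is z-asymmetric if and only if n_i(λ,tn) + n_{t−z−1−i}(λ,tn) = 2n for all 0 ≤ i ≤ t − z − 1 and n_i(λ,tn) = n for all t − z ≤ i ≤ t − 1. -/
open BigOperators

/-- `λ` is a `t`-core: whenever a beta number is `≥ t`, the beta number `β - t` also
occurs (equivalently, no hook length of `λ` equals `t`). -/
def IsTCore (t m : ℕ) (lam : Fin m → ℕ) : Prop :=
  ∀ j : Fin m, t ≤ betaSet m lam j →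
    ∃ k : Fin m, betaSet m lam k = betaSet m lam j - t

/-- The (Frobenius) rank of a partition: `max {k : λ_k ≥ k}` (`0` for the empty
partition). -/
def rankP (m : ℕ) (lam : Fin m → ℕ) : ℕ :=
  (Finset.univ.filter fun j : Fin m => (j : ℕ) + 1 ≤ lam j).sup fun j => (j : ℕ) + 1

/-- `λ` is `z`-asymmetric: `λ'_i - i = λ_i - i + z` for all `1 ≤ i ≤ rank(λ)`, where
`λ'_i = #{j : λ_j ≥ i}` is the conjugate partition. -/
def ZAsym (z : ℤ) (m : ℕ) (lam : Fin m → ℕ) : Prop :=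
  ∀ i : Fin m, (i : ℕ) + 1 ≤ rankP m lam →
    ((Finset.univ.filter fun j : Fin m => (i : ℕ) + 1 ≤ lam j).card : ℤ) = (lam i : ℤ) + z


/-- Generic "initial segment" lemma. -/
lemma initseg {g : ℕ → Prop} [DecidablePred g] {K : ℕ}
    (hdec : ∀ k, g (k+1) → g k) (hbd : ∀ k, g k → k < K) (k : ℕ) :
    g k ↔ k < ((Finset.range K).filter g).card := by
  have hdown : ∀ j k, j ≤ k → g k → g j := by
    intro j k hjk hk
    induction k with
    | zero => simpa [Nat.le_zero.mp hjk] using hk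
    | succ k ih =>
      rcases Nat.lt_or_ge j (k+1) with h | h
      · exact ih (by omega) (hdec k hk)
      · have : j = k + 1 := by omega
        simpa [this] using hk
  constructor
  · intro hk
    have hsub : Finset.range (k+1) ⊆ (Finset.range K).filter g := by
      intro j hj
      simp only [Finset.mem_range] at hj
      simp only [Finset.mem_filter, Finset.mem_range]
      exact ⟨lt_of_le_of_lt (by omega) (hbd k hk), hdown j k (by omega) hk⟩
    have := Finset.card_le_card hsub
    simpa using this
  · intro hlt
    by_contra hne
    have hsub : (Finset.range K).filter g ⊆ Finset.range k := by
      intro j hj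
      simp only [Finset.mem_filter, Finset.mem_range] at hj
      simp only [Finset.mem_range]
      by_contra hjk
      exact hne (hdown k j (by omega) hj.2)
    have := Finset.card_le_card hsub
    simp only [Finset.card_range] at this
    omega

/-- Two strictly decreasing enumerations with the same image agree. -/
lemma match_anti {r : ℕ} {f g : ℕ → ℤ}
    (hf : ∀ i j, i < j → j < r → f j < f i)
    (hg : ∀ i j, i < j → j < r → g j < g i)
    (him : ∀ x, (∃ j, j < r ∧ f j = x) ↔ (∃ j, j < r ∧ g j = x)) :
    ∀ j, j < r → f j = g j := by
  intro j
  induction j using Nat.strong_induction_on with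
  | _ j ih =>
    intro hj
    obtain ⟨k, hk, hgk⟩ := (him (f j)).mp ⟨j, hj, rfl⟩
    obtain ⟨k', hk', hfk'⟩ := (him (g j)).mpr ⟨j, hj, rfl⟩
    rcases lt_trichotomy k j with h | h | h
    · exfalso
      have := ih k h hk
      have := hf k j h hj
      omega
    · subst h; exact hgk.symm
    · have h1 : f j < g j := by have := hg j k h hk; omega
      rcases lt_trichotomy k' j with h' | h' | h'
      · exfalso
        have := ih k' h' hk'
        have := hg k' j h' hj
        omega
      · subst h'; exact hfk'
      · have h2 : g j < f j := by have := hf j k' h' hk'; omega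
        omega

def extendL (m : ℕ) (lam : Fin m → ℕ) (j : ℕ) : ℕ :=
  if h : j < m then lam ⟨j, h⟩ else 0

def SSx (L : ℕ → ℕ) (x : ℤ) : Prop :=
  ∃ j : ℕ, x = (L j : ℤ) - (j + 1)

def conjC (m : ℕ) (L : ℕ → ℕ) (c : ℕ) : ℕ :=
  ((Finset.range m).filter fun j => c ≤ L j).card

def dD (m : ℕ) (L : ℕ → ℕ) (c : ℕ) : ℤ :=
  (c : ℤ) - 1 - conjC m L c

section Aux

variable {m : ℕ} {L : ℕ → ℕ}
  (hL : ∀ j k : ℕ, j ≤ k → L k ≤ L j) (h0 : ∀ j, m ≤ j → L j = 0)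

include hL h0 in
lemma galoisL (c j : ℕ) (hc : 1 ≤ c) : c ≤ L j ↔ j < conjC m L c := by
  have := initseg (g := fun j => c ≤ L j) (K := m)
    (fun k hk => le_trans hk (hL k (k+1) (by omega)))
    (fun k hk => by
      by_contra hkm
      have := h0 k (by omega)
      omega) j
  simpa [conjC] using this

lemma conjC_anti (c : ℕ) : conjC m L (c+1) ≤ conjC m L c := by
  apply Finset.card_le_card
  intro j hj
  simp only [Finset.mem_filter] at hj ⊢
  exact ⟨hj.1, by omega⟩

lemma dD_strictMono : StrictMono (dD m L) := by
  apply strictMono_nat_of_lt_succ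
  intro c
  have := conjC_anti (m := m) (L := L) c
  unfold dD
  push_cast
  omega

include hL h0 in
lemma disjL (j c : ℕ) (hc : 1 ≤ c) : ((L j : ℤ) - (j + 1)) ≠ dD m L c := by
  intro heq
  have hnat : L j + conjC m L c = c + j := by
    unfold dD at heq
    omega
  by_cases hcL : c ≤ L j
  · have := (galoisL hL h0 c j hc).mp hcL
    omega
  · have : ¬ (j < conjC m L c) := fun h => hcL ((galoisL hL h0 c j hc).mpr h)
    omega

include hL h0 in
lemma coverL (x : ℤ) (hx : ¬ SSx L x) : ∃ c, 1 ≤ c ∧ x = dD m L c := by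
  classical
  set K1 : ℕ := m + x.natAbs + 1 with hK1
  have hdec : ∀ k, (x < (L (k+1) : ℤ) - (k+1+1)) → (x < (L k : ℤ) - (k+1)) := by
    intro k hk
    have h1 : (L (k+1) : ℤ) ≤ L k := by exact_mod_cast hL k (k+1) (by omega)
    push_cast at hk ⊢
    omega
  have hbd : ∀ k, (x < (L k : ℤ) - (k+1)) → k < K1 := by
    intro k hk
    by_cases hkm : k < m
    · omega
    · have := h0 k (by omega)
      rw [this] at hk
      push_cast at hk
      omega
  have hK := initseg (g := fun k => x < (L k : ℤ) - (k+1)) (K := K1) hdec hbd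
  set K : ℕ := ((Finset.range K1).filter fun k => x < (L k : ℤ) - (k+1)).card with hKdef
  have hxK : 0 ≤ x + K := by
    by_cases hx0 : 0 ≤ x
    · omega
    · set j0 : ℕ := x.natAbs - 1 with hj0def
      have hj0 : (j0 : ℤ) = -x - 1 := by omega
      have hne : x ≠ (L j0 : ℤ) - (j0 + 1) := fun h => hx ⟨j0, h⟩
      have hpos : (0:ℤ) ≤ (L j0 : ℤ) := by positivity
      have hgj0 : x < (L j0 : ℤ) - (j0 + 1) := by omega
      have := (hK j0).mp hgj0
      omega
  set c : ℕ := (x + 1 + K).toNat with hcdef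
  have hc : (c : ℤ) = x + 1 + K := Int.toNat_of_nonneg (by omega)
  have hc1 : 1 ≤ c := by omega
  have key : ∀ j, c ≤ L j ↔ j < K := by
    intro j
    constructor
    · intro hcL
      by_contra hjK
      have h1 : ¬ (x < (L K : ℤ) - (K+1)) := fun hh => absurd ((hK K).mp hh) (by omega)
      have h2 : (L j : ℤ) ≤ L K := by exact_mod_cast hL K j (by omega)
      have h3 : (c : ℤ) ≤ L j := by exact_mod_cast hcL
      have : x = (L K : ℤ) - (K + 1) := by omega
      exact hx ⟨K, this⟩
    · intro hjK
      have hK1' : 1 ≤ K := by omega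
      have hg : x < (L (K-1) : ℤ) - ((K-1 : ℕ) + 1) := (hK (K-1)).mpr (by omega)
      have h2 : (L (K-1) : ℤ) ≤ L j := by exact_mod_cast hL j (K-1) (by omega)
      have : (c:ℤ) ≤ (L j : ℤ) := by omega
      exact_mod_cast this
  have hCK : conjC m L c = K := by
    have hg : ∀ j, c ≤ L j ↔ j < conjC m L c := fun j => galoisL hL h0 c j hc1
    have h1 := (hg (conjC m L c)).symm.trans (key (conjC m L c))
    have h2 := (hg K).symm.trans (key K)
    omega
  refine ⟨c, hc1, ?_⟩
  unfold dD
  rw [hCK, hc]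
  ring

end Aux

section Aux2

variable {m : ℕ} {lam : Fin m → ℕ}

lemma extendL_zero (j : ℕ) (hj : m ≤ j) : extendL m lam j = 0 := by
  unfold extendL
  rw [dif_neg (by omega)]

lemma extendL_lt (j : ℕ) (hj : j < m) : extendL m lam j = lam ⟨j, hj⟩ := by
  unfold extendL
  rw [dif_pos hj]

variable (hanti : ∀ j k : Fin m, j ≤ k → lam k ≤ lam j)

include hanti in
lemma extendL_anti : ∀ j k : ℕ, j ≤ k → extendL m lam k ≤ extendL m lam j := by
  intro j k hjk
  by_cases hk : k < m
  · rw [extendL_lt k hk, extendL_lt j (by omega)]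
    exact hanti _ _ (by simpa [Fin.le_def])
  · rw [extendL_zero k (by omega)]
    omega

include hanti in
lemma rank_iff (j : ℕ) : j < rankP m lam ↔ j + 1 ≤ extendL m lam j := by
  constructor
  · intro h
    have hne : (Finset.univ.filter fun j : Fin m => (j : ℕ) + 1 ≤ lam j).Nonempty := by
      by_contra hemp
      rw [Finset.not_nonempty_iff_eq_empty] at hemp
      unfold rankP at h
      rw [hemp] at h
      simp at h
    obtain ⟨j', hj'mem, hj'⟩ := Finset.exists_mem_eq_sup _ hne (fun j : Fin m => (j : ℕ) + 1)
    simp only [Finset.mem_filter, Finset.mem_univ, true_and] at hj'mem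
    have hjr : j < rankP m lam := h
    rw [show rankP m lam = (j' : ℕ) + 1 from hj'] at hjr
    have hjj' : j ≤ (j' : ℕ) := by omega
    have hjm : j < m := lt_of_le_of_lt hjj' j'.isLt
    rw [extendL_lt j hjm]
    have := hanti ⟨j, hjm⟩ j' (by simpa [Fin.le_def])
    omega
  · intro h
    have hjm : j < m := by
      by_contra hc
      rw [extendL_zero j (by omega)] at h
      omega
    rw [extendL_lt j hjm] at h
    have hmem : (⟨j, hjm⟩ : Fin m) ∈
        Finset.univ.filter fun j : Fin m => (j : ℕ) + 1 ≤ lam j := by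
      simp only [Finset.mem_filter, Finset.mem_univ, true_and]
      exact h
    have h2 : j + 1 ≤ (Finset.univ.filter fun j : Fin m => (j : ℕ) + 1 ≤ lam j).sup
        (fun j : Fin m => (j : ℕ) + 1) := by
      simpa using Finset.le_sup (f := fun j : Fin m => (j : ℕ) + 1) hmem
    unfold rankP
    omega

lemma conj_card (c : ℕ) :
    (Finset.univ.filter fun jj : Fin m => c ≤ lam jj).card = conjC m (extendL m lam) c := by
  unfold conjC
  apply Finset.card_bij (fun (j : Fin m) _ => (j : ℕ))
  · intro a ha
    simp only [Finset.mem_filter, Finset.mem_univ, true_and] at ha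
    simp only [Finset.mem_filter, Finset.mem_range]
    exact ⟨a.isLt, by rwa [extendL_lt _ a.isLt, Fin.eta]⟩
  · intro a _ b _ hab
    exact Fin.val_injective hab
  · intro b hb
    simp only [Finset.mem_filter, Finset.mem_range] at hb
    refine ⟨⟨b, hb.1⟩, ?_, rfl⟩
    simp only [Finset.mem_filter, Finset.mem_univ, true_and]
    have := hb.2
    rwa [extendL_lt _ hb.1] at this

include hanti in
lemma zasym_iff_star (z : ℕ) (hm : 1 ≤ m) :
    ZAsym (z : ℤ) m lam ↔
      ∀ c, 1 ≤ c → c ≤ rankP m lam →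
        conjC m (extendL m lam) c = extendL m lam (c-1) + z := by
  have hrle : rankP m lam ≤ m := by
    unfold rankP
    apply Finset.sup_le
    intro j _
    omega
  constructor
  · intro hza c hc1 hcr
    have hcm : c - 1 < m := by omega
    have := hza ⟨c-1, hcm⟩ (by simpa using (by omega : (c-1) + 1 ≤ rankP m lam))
    rw [conj_card] at this
    rw [show c - 1 + 1 = c from by omega] at this
    rw [extendL_lt (c-1) hcm]
    exact_mod_cast this
  · intro hstar i hi
    have h := hstar ((i : ℕ) + 1) (by omega) hi
    simp only [Nat.add_sub_cancel] at h
    rw [extendL_lt (i : ℕ) i.isLt, Fin.eta] at h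
    rw [conj_card]
    exact_mod_cast h

end Aux2

section Aux3

variable {m r z : ℕ} {L : ℕ → ℕ}
  (hL : ∀ j k : ℕ, j ≤ k → L k ≤ L j) (h0 : ∀ j, m ≤ j → L j = 0)
  (hr : ∀ j : ℕ, j < r ↔ j + 1 ≤ L j)

include hL h0 hr

lemma P1lem (x : ℤ) (hx : 0 ≤ x) :
    SSx L x ↔ ∃ j, j < r ∧ x = (L j : ℤ) - (j + 1) := by
  constructor
  · rintro ⟨j, hj⟩
    refine ⟨j, ?_, hj⟩
    rw [hr j]
    omega
  · rintro ⟨j, _, hj⟩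
    exact ⟨j, hj⟩

lemma rankconj (c : ℕ) (hc : 1 ≤ c) : c ≤ r ↔ c ≤ conjC m L c := by
  have g := galoisL hL h0 c (c-1) hc
  have h := hr (c-1)
  omega

lemma P2lem (y : ℤ) (hy : y < 0) :
    SSx L y ↔ ¬ ∃ c, 1 ≤ c ∧ c ≤ r ∧ y = dD m L c := by
  constructor
  · rintro ⟨j, hj⟩ ⟨c, hc1, _, hdc⟩
    exact disjL hL h0 j c hc1 (hj.symm.trans hdc)
  · intro hE
    by_contra hSS
    obtain ⟨c, hc1, hdc⟩ := coverL hL h0 y hSS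
    refine hE ⟨c, hc1, ?_, hdc⟩
    rw [rankconj hL h0 hr c hc1]
    unfold dD at hdc
    omega

lemma star_iff_Q :
    (∀ c, 1 ≤ c → c ≤ r → conjC m L c = L (c-1) + z) ↔
      ((∀ x : ℤ, 0 ≤ x → (SSx L x ↔ ¬ SSx L (-x - z - 1))) ∧
        (∀ s : ℕ, s < z → SSx L (-(s:ℤ) - 1))) := by
  constructor
  · intro hstar
    constructor
    · intro x hx
      have hy : -x - z - 1 < 0 := by omega
      rw [P1lem hL h0 hr x hx, P2lem hL h0 hr _ hy, not_not]
      constructor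
      · rintro ⟨j, hjr, hxj⟩
        refine ⟨j+1, by omega, by omega, ?_⟩
        have hc := hstar (j+1) (by omega) (by omega)
        simp only [Nat.add_sub_cancel] at hc
        unfold dD
        omega
      · rintro ⟨c, hc1, hcr, hy'⟩
        refine ⟨c-1, by omega, ?_⟩
        have hc := hstar c hc1 hcr
        unfold dD at hy'
        omega
    · intro s hs
      have hy : -(s:ℤ) - 1 < 0 := by omega
      rw [P2lem hL h0 hr _ hy]
      rintro ⟨c, hc1, hcr, heq⟩
      have h1 := hstar c hc1 hcr
      have h2 : c ≤ L (c-1) := by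
        have := hr (c-1)
        omega
      unfold dD at heq
      omega
  · rintro ⟨Q1, Q2⟩
    have step1 : ∀ c, 1 ≤ c → c ≤ r → (c:ℤ) + z ≤ conjC m L c := by
      intro c hc1 hcr
      by_contra hcon
      have hd0 : dD m L c < 0 := by
        have := (rankconj hL h0 hr c hc1).mp hcr
        unfold dD
        omega
      have hdz : -(z:ℤ) ≤ dD m L c := by
        unfold dD at *
        omega
      set s : ℕ := (-(dD m L c) - 1).toNat with hsdef
      have hs : (s:ℤ) = -(dD m L c) - 1 := by omega
      have hsz : s < z := by omega
      obtain ⟨j, hj⟩ := Q2 s hsz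
      have : (L j : ℤ) - (j+1) = dD m L c := by omega
      exact disjL hL h0 j c hc1 this
    set f : ℕ → ℤ := fun j => (L j : ℤ) - (j + 1) with hfdef
    set g : ℕ → ℤ := fun j => (conjC m L (j+1) : ℤ) - (j + 1) - z with hgdef
    have hfanti : ∀ i j, i < j → j < r → f j < f i := by
      intro i j hij _
      have := hL i j (by omega)
      simp only [hfdef]
      have : (L j : ℤ) ≤ L i := by exact_mod_cast this
      omega
    have hganti : ∀ i j, i < j → j < r → g j < g i := by
      intro i j hij _
      have := dD_strictMono (m := m) (L := L) (show i + 1 < j + 1 by omega)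
      unfold dD at this
      simp only [hgdef]
      push_cast at this ⊢
      omega
    have him : ∀ x : ℤ, (∃ j, j < r ∧ f j = x) ↔ (∃ j, j < r ∧ g j = x) := by
      intro x
      by_cases hx : 0 ≤ x
      · have hy : -x - z - 1 < 0 := by omega
        constructor
        · rintro ⟨j, hjr, hfj⟩
          have hSS : SSx L x := ⟨j, hfj.symm⟩
          have hnSS := (Q1 x hx).mp hSS
          have hE : ∃ c, 1 ≤ c ∧ c ≤ r ∧ -x - z - 1 = dD m L c := by
            by_contra hE
            exact hnSS ((P2lem hL h0 hr _ hy).mpr hE)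
          obtain ⟨c, hc1, hcr, hyc⟩ := hE
          refine ⟨c-1, by omega, ?_⟩
          rw [hgdef]
          simp only
          rw [show c - 1 + 1 = c from by omega]
          unfold dD at hyc
          omega
        · rintro ⟨j, hjr, hgj⟩
          have hy0 : -x - z - 1 = dD m L (j+1) := by
            simp only [hgdef] at hgj
            unfold dD
            push_cast
            omega
          have hnSS : ¬ SSx L (-x - z - 1) := fun hSS =>
            (P2lem hL h0 hr _ hy).mp hSS ⟨j+1, by omega, by omega, hy0⟩
          have hSS : SSx L x := (Q1 x hx).mpr hnSS
          obtain ⟨j', hj'r, hj'⟩ := (P1lem hL h0 hr x hx).mp hSS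
          exact ⟨j', hj'r, hj'.symm⟩
      · constructor
        · rintro ⟨j, hjr, hfj⟩
          exfalso
          have := (hr j).mp hjr
          have : (j:ℤ) + 1 ≤ L j := by exact_mod_cast this
          simp only [hfdef] at hfj
          omega
        · rintro ⟨j, hjr, hgj⟩
          exfalso
          have := step1 (j+1) (by omega) (by omega)
          simp only [hgdef] at hgj
          push_cast at this
          omega
    have hmatch := match_anti hfanti hganti him
    intro c hc1 hcr
    have := hmatch (c-1) (by omega)
    simp only [hfdef, hgdef] at this
    rw [show c - 1 + 1 = c from by omega] at this
    omega

end Aux3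

lemma SSx_iff_memB {m : ℕ} (lam : Fin m → ℕ) (u : ℕ) :
    SSx (extendL m lam) ((u:ℤ) - m) ↔ ∃ j : Fin m, betaSet m lam j = u := by
  constructor
  · rintro ⟨j, hj⟩
    by_cases hjm : j < m
    · refine ⟨⟨j, hjm⟩, ?_⟩
      unfold betaSet
      have he : extendL m lam j = lam ⟨j, hjm⟩ := extendL_lt j hjm
      rw [← he]
      simp only [Fin.val_mk] at hj ⊢
      omega
    · exfalso
      have h0 : extendL m lam j = 0 := extendL_zero j (by omega)
      rw [h0] at hj
      push_cast at hj
      omega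
  · rintro ⟨j, hj⟩
    refine ⟨(j : ℕ), ?_⟩
    have he : extendL m lam (j : ℕ) = lam j := by rw [extendL_lt _ j.isLt, Fin.eta]
    unfold betaSet at hj
    have hjl := j.isLt
    rw [he]
    omega

lemma SSx_neg {m : ℕ} (lam : Fin m → ℕ) (x : ℤ) (hx : x ≤ -(m:ℤ) - 1) :
    SSx (extendL m lam) x := by
  refine ⟨(-x - 1).toNat, ?_⟩
  have h1 : ((-x-1).toNat : ℤ) = -x - 1 := Int.toNat_of_nonneg (by omega)
  rw [extendL_zero _ (by omega)]
  push_cast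
  omega

lemma nc_struct {t m : ℕ} (ht : 0 < t) (hm : 0 < m) (lam : Fin m → ℕ)
    (hanti : ∀ j k : Fin m, j ≤ k → lam k ≤ lam j) (hcore : IsTCore t m lam)
    (i : ℕ) (hi : i < t) (k : ℕ) :
    (∃ j : Fin m, betaSet m lam j = i + k * t) ↔ k < ncount t m lam i := by
  classical
  have hbanti : ∀ j l : Fin m, j < l → betaSet m lam l < betaSet m lam j := by
    intro j l hjl
    unfold betaSet
    have h1 := hanti j l (le_of_lt hjl)
    have hj := j.isLt
    have hl := l.isLt
    have h2 : (j:ℕ) < (l:ℕ) := hjl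
    omega
  have hbinj : ∀ j l : Fin m, betaSet m lam j = betaSet m lam l → j = l := by
    intro j l h
    rcases lt_trichotomy j l with h' | h' | h'
    · have := hbanti j l h'; omega
    · exact h'
    · have := hbanti l j h'; omega
  have hb0 : ∀ j : Fin m, betaSet m lam j < lam ⟨0, hm⟩ + m := by
    intro j
    unfold betaSet
    have h1 := hanti ⟨0, hm⟩ j (by simp [Fin.le_def])
    have := j.isLt
    omega
  set K0 : ℕ := lam ⟨0, hm⟩ + m with hK0
  have hdec : ∀ kk, (∃ j : Fin m, betaSet m lam j = i + (kk+1)*t) →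
      ∃ j : Fin m, betaSet m lam j = i + kk*t := by
    rintro kk ⟨j, hj⟩
    have he : i + (kk+1)*t = (i + kk*t) + t := by ring
    have ht' : t ≤ betaSet m lam j := by rw [hj, he]; exact Nat.le_add_left t _
    obtain ⟨j', hj'⟩ := hcore j ht'
    refine ⟨j', ?_⟩
    rw [hj', hj, he]
    exact Nat.add_sub_cancel _ _
  have hbd : ∀ kk, (∃ j : Fin m, betaSet m lam j = i + kk*t) → kk < K0 := by
    rintro kk ⟨j, hj⟩
    have h1 := hb0 j
    rw [hj] at h1
    have h2 : kk ≤ kk * t := Nat.le_mul_of_pos_right kk ht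
    linarith
  have hseg := initseg (g := fun kk => ∃ j : Fin m, betaSet m lam j = i + kk*t)
    (K := K0) hdec hbd k
  rw [hseg]
  have hcard : ((Finset.range K0).filter
      (fun kk => ∃ j : Fin m, betaSet m lam j = i + kk*t)).card = ncount t m lam i := by
    unfold ncount
    refine (Finset.card_bij (fun (j : Fin m) _ => betaSet m lam j / t) ?_ ?_ ?_).symm
    · intro j hjmem
      simp only [Finset.mem_filter, Finset.mem_univ, true_and] at hjmem
      simp only [Finset.mem_filter, Finset.mem_range]
      constructor
      · exact lt_of_le_of_lt (Nat.div_le_self _ _) (hb0 j)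
      · refine ⟨j, ?_⟩
        conv_lhs => rw [← Nat.div_add_mod (betaSet m lam j) t]
        rw [hjmem, Nat.mul_comm]
        exact Nat.add_comm _ _
    · intro a ha b hb hab
      simp only [Finset.mem_filter, Finset.mem_univ, true_and] at ha hb
      apply hbinj
      have h1 : betaSet m lam a = t * (betaSet m lam a / t) + i := by
        conv_lhs => rw [← Nat.div_add_mod (betaSet m lam a) t]
        rw [ha]
      have h2 : betaSet m lam b = t * (betaSet m lam b / t) + i := by
        conv_lhs => rw [← Nat.div_add_mod (betaSet m lam b) t]
        rw [hb]
      rw [h1, h2, hab]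
    · intro b hb
      simp only [Finset.mem_filter, Finset.mem_range] at hb
      obtain ⟨hbK, j, hj⟩ := hb
      refine ⟨j, ?_, ?_⟩
      · simp only [Finset.mem_filter, Finset.mem_univ, true_and]
        rw [hj, Nat.add_mul_mod_self_right, Nat.mod_eq_of_lt hi]
      · show betaSet m lam j / t = b
        rw [hj, Nat.add_mul_div_right _ _ ht, Nat.div_eq_of_lt hi]
        omega
  rw [hcard]

lemma Qmem_iff_R {t n z m : ℕ} (ht : 2 ≤ t) (hz : z + 2 ≤ t) (hn : 1 ≤ n) (hm : m = t * n)
    {MB : ℕ → Prop} {nc : ℕ → ℕ}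
    (hmem : ∀ i, i < t → ∀ k, (MB (i + k * t) ↔ k < nc i)) :
    ((∀ u v : ℕ, u + v + z + 1 = 2 * m → m ≤ u → (MB u ↔ ¬ MB v)) ∧
     (∀ u : ℕ, 2 * m ≤ u + z → ¬ MB u) ∧
     (∀ u : ℕ, m ≤ u + z → u < m → MB u)) ↔
    ((∀ i ≤ t - z - 1, nc i + nc (t - z - 1 - i) = 2 * n) ∧
     (∀ i, t - z ≤ i → i ≤ t - 1 → nc i = n)) := by
  obtain ⟨n', rfl⟩ : ∃ n', n = n' + 1 := ⟨n - 1, by omega⟩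
  obtain ⟨w, hw⟩ : ∃ w, w + z + 1 = t := ⟨t - z - 1, by omega⟩
  subst hm
  have ht0 : 0 < t := by omega
  have hdecomp : ∀ u : ℕ, u % t < t ∧ u = u % t + (u / t) * t := by
    intro u
    refine ⟨Nat.mod_lt u ht0, ?_⟩
    conv_lhs => rw [← Nat.mod_add_div u t]
    rw [Nat.mul_comm]
  constructor
  · rintro ⟨ha, hb, hc⟩
    have hnc2 : ∀ i, i < t → nc i ≤ 2*(n'+1) := by
      intro i hi
      by_contra hcon
      push_neg at hcon
      have hMB : MB (i + (2*n'+2) * t) := (hmem i hi (2*n'+2)).mpr (by omega)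
      refine hb (i + (2*n'+2)*t) ?_ hMB
      have e : 2*(t*(n'+1)) = (2*n'+2)*t := by ring
      linarith
    have hlow : ∀ i, t - z ≤ i → i ≤ t - 1 → n' + 1 ≤ nc i := by
      intro i h1 h2
      have hi : i < t := by omega
      have hMB : MB (i + n'*t) := by
        apply hc
        · have e : t*(n'+1) = n'*t + t := by ring
          have h3 : t ≤ i + z := by omega
          linarith
        · have e : t*(n'+1) = n'*t + t := by ring
          linarith
      have := (hmem i hi n').mp hMB
      omega
    constructor
    · -- R1
      intro i hile
      set i' := t - z - 1 - i with hi'def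
      have hii' : i + i' + z + 1 = t := by omega
      have hit : i < t := by omega
      have hi't : i' < t := by omega
      have hfam : ∀ k k', k + k' + 1 = 2*(n'+1) → n'+1 ≤ k →
          ((k < nc i) ↔ ¬ (k' < nc i')) := by
        intro k k' hkk hk
        have hsum : i + k*t + (i' + k'*t) + z + 1 = 2*(t*(n'+1)) := by
          have e : i + k*t + (i' + k'*t) + z + 1 = (i + i' + z + 1) + (k + k')*t := by ring
          rw [e, hii']
          have e2 : k + k' = 2*n'+1 := by omega
          rw [e2]; ring
        have hu : t*(n'+1) ≤ i + k*t := by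
          have e : t*(n'+1) = (n'+1)*t := by ring
          have h2 : (n'+1)*t ≤ k*t := mul_le_mul_left hk t
          linarith
        have h1 := ha _ _ hsum hu
        rw [hmem i hit k, hmem i' hi't k'] at h1
        exact h1
      have hfam' : ∀ k k', k + k' + 1 = 2*(n'+1) → n'+1 ≤ k →
          ((k < nc i') ↔ ¬ (k' < nc i)) := by
        intro k k' hkk hk
        have hsum : i' + k*t + (i + k'*t) + z + 1 = 2*(t*(n'+1)) := by
          have e : i' + k*t + (i + k'*t) + z + 1 = (i + i' + z + 1) + (k + k')*t := by ring
          rw [e, hii']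
          have e2 : k + k' = 2*n'+1 := by omega
          rw [e2]; ring
        have hu : t*(n'+1) ≤ i' + k*t := by
          have e : t*(n'+1) = (n'+1)*t := by ring
          have h2 : (n'+1)*t ≤ k*t := mul_le_mul_left hk t
          linarith
        have h1 := ha _ _ hsum hu
        rw [hmem i' hi't k, hmem i hit k'] at h1
        exact h1
      have h2i := hnc2 i hit
      have h2i' := hnc2 i' hi't
      have hA : 2*(n'+1) ≤ nc i + nc i' := by
        by_cases hp : nc i ≤ n'
        · have := hfam' (2*(n'+1)-1-(nc i)) (nc i) (by omega) (by omega)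
          omega
        · by_cases hp2 : nc i ≤ 2*n'+1
          · have := hfam (nc i) (2*(n'+1)-1-(nc i)) (by omega) (by omega)
            omega
          · omega
      have hB : nc i + nc i' ≤ 2*(n'+1) := by
        by_cases hq : n'+2 ≤ nc i'
        · have := hfam' (nc i' - 1) (2*(n'+1)-(nc i')) (by omega) (by omega)
          omega
        · by_cases hp : nc i ≤ n'+1
          · omega
          · have := hfam (nc i - 1) (2*(n'+1)-(nc i)) (by omega) (by omega)
            omega
      omega
    · -- R2
      intro i h1 h2
      have hi : i < t := by omega
      have hl := hlow i h1 h2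
      by_contra hcon
      have hcon2 : n' + 2 ≤ nc i := by omega
      by_cases hcase : 2*(t*(n'+1)) ≤ i + (n'+1)*t + z
      · exact hb _ hcase ((hmem i hi (n'+1)).mpr (by omega))
      · push_neg at hcase
        have e1 : (n'+1)*t = n'*t + t := by ring
        have e2 : 2*(t*(n'+1)) = 2*(n'*t) + 2*t := by ring
        have h4 : t ≤ i + z := by omega
        have h5 : 0 < n' * t := by linarith
        have hn1 : 1 ≤ n' := by
          rcases Nat.eq_zero_or_pos n' with h | h
          · subst h; simp at h5
          · exact h
        obtain ⟨n'', rfl⟩ : ∃ a, n' = a + 1 := ⟨n' - 1, by omega⟩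
        set i' := 2*t - z - 1 - i with hi'def
        have hii' : i + i' + z + 1 = 2*t := by omega
        have hi't : i' < t := by omega
        have hi'1 : t - z ≤ i' := by omega
        have hMBu : MB (i + (n''+2)*t) := (hmem i hi (n''+2)).mpr (by omega)
        have hMBv : MB (i' + n''*t) := (hmem i' hi't n'').mpr
          (by have := hlow i' hi'1 (by omega); omega)
        have hsum : i + (n''+2)*t + (i' + n''*t) + z + 1 = 2*(t*(n''+1+1)) := by
          have e : i + (n''+2)*t + (i' + n''*t) + z + 1 = (i + i' + z + 1) + (2*n''+2)*t := by
            ring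
          rw [e, hii']; ring
        have hu : t*(n''+1+1) ≤ i + (n''+2)*t := by
          have e : t*(n''+1+1) = (n''+2)*t := by ring
          linarith
        exact (ha _ _ hsum hu).mp hMBu hMBv
  · rintro ⟨R1, R2⟩
    refine ⟨?_, ?_, ?_⟩
    · -- pairing
      intro u v hsum hu
      obtain ⟨hiu, hdu⟩ := hdecomp u
      obtain ⟨hiv, hdv⟩ := hdecomp v
      set I := u % t with hIdef
      set K := u / t with hKdef
      set I' := v % t with hI'def
      set K' := v / t with hK'def
      have hs : (I + I' + z + 1) + (K + K')*t = 2*(t*(n'+1)) := by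
        have e : (I + I' + z + 1) + (K + K')*t = (I + K*t) + (I' + K'*t) + z + 1 := by ring
        rw [e, ← hdu, ← hdv]; exact hsum
      have hql : K + K' ≤ 2*n'+1 := by
        by_contra hc2
        have h3 : (2*n'+2)*t ≤ (K+K')*t := mul_le_mul_left (by omega) t
        have e : 2*(t*(n'+1)) = (2*n'+2)*t := by ring
        linarith
      have hqg : 2*n' ≤ K + K' := by
        by_contra hc2
        have h3 : (K+K'+1)*t ≤ (2*n')*t := mul_le_mul_left (by omega) t
        have e : (K+K'+1)*t = (K+K')*t + t := by ring
        have e2 : 2*(t*(n'+1)) = (2*n')*t + 2*t := by ring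
        linarith
      rcases (by omega : K + K' = 2*n'+1 ∨ K + K' = 2*n') with hq | hq
      · have hs2 : I + I' + z + 1 = t := by
          have e : 2*(t*(n'+1)) = (2*n'+1)*t + t := by ring
          rw [hq] at hs; linarith
        have hR := R1 I (by omega)
        have hI'eq : t - z - 1 - I = I' := by omega
        rw [hI'eq] at hR
        rw [hdu, hdv, hmem I hiu K, hmem I' hiv K']
        omega
      · have hs2 : I + I' + z + 1 = 2*t := by
          have e : 2*(t*(n'+1)) = (2*n')*t + 2*t := by ring
          rw [hq] at hs; linarith
        have hRi := R2 I (by omega) (by omega)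
        have hRi' := R2 I' (by omega) (by omega)
        have hK1 : n'+1 ≤ K := by
          by_contra hc2
          have h3 : K*t ≤ n'*t := mul_le_mul_left (by omega) t
          have e : t*(n'+1) = n'*t + t := by ring
          rw [hdu] at hu; linarith
        rw [hdu, hdv, hmem I hiu K, hmem I' hiv K']
        omega
    · -- upper
      intro u hu hMB
      obtain ⟨hiu, hdu⟩ := hdecomp u
      set I := u % t with hIdef
      set K := u / t with hKdef
      rw [hdu] at hMB
      have hk := (hmem I hiu K).mp hMB
      rw [hdu] at hu
      by_cases hiw : I ≤ w
      · have hR := R1 I (by omega)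
        have hkb : K ≤ 2*n'+1 := by omega
        have h2 : K*t ≤ (2*n'+1)*t := mul_le_mul_left hkb t
        have e : 2*(t*(n'+1)) = (2*n'+1)*t + t := by ring
        linarith
      · have hR := R2 I (by omega) (by omega)
        have hkb : K ≤ n' := by omega
        have h2 : K*t ≤ n'*t := mul_le_mul_left hkb t
        have e : 2*(t*(n'+1)) = 2*(n'*t) + 2*t := by ring
        linarith [Nat.zero_le (n'*t)]
    · -- middle
      intro u h1 h2
      obtain ⟨hiu, hdu⟩ := hdecomp u
      set I := u % t with hIdef
      set K := u / t with hKdef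
      have hkle : K ≤ n' := by
        by_contra hc2
        have h3 : (n'+1)*t ≤ K*t := mul_le_mul_left (by omega) t
        have e : t*(n'+1) = (n'+1)*t := by ring
        rw [hdu] at h2; linarith
      have hkge : n' ≤ K := by
        by_contra hc2
        have h3 : (K+1)*t ≤ n'*t := mul_le_mul_left (by omega) t
        have e : (K+1)*t = K*t + t := by ring
        have e2 : t*(n'+1) = n'*t + t := by ring
        rw [hdu] at h1; linarith
      have hkeq : K = n' := by omega
      have hiw : w + 1 ≤ I := by
        by_contra hc2
        have e2 : t*(n'+1) = n'*t + t := by ring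
        rw [hdu, hkeq] at h1
        linarith
      have hR := R2 I (by omega) (by omega)
      rw [hdu, hkeq]
      exact (hmem I hiu n').mpr (by omega)

lemma Q_iff_Qmem {m z : ℕ} (lam : Fin m → ℕ) (hm1 : 1 ≤ m) (hmz : z + 2 ≤ m) :
    ((∀ x : ℤ, 0 ≤ x →
        (SSx (extendL m lam) x ↔ ¬ SSx (extendL m lam) (-x - z - 1))) ∧
      (∀ s : ℕ, s < z → SSx (extendL m lam) (-(s:ℤ) - 1))) ↔
    ((∀ u v : ℕ, u + v + z + 1 = 2 * m → m ≤ u →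
        ((∃ j : Fin m, betaSet m lam j = u) ↔ ¬ (∃ j : Fin m, betaSet m lam j = v))) ∧
      (∀ u : ℕ, 2 * m ≤ u + z → ¬ (∃ j : Fin m, betaSet m lam j = u)) ∧
      (∀ u : ℕ, m ≤ u + z → u < m → (∃ j : Fin m, betaSet m lam j = u))) := by
  constructor
  · rintro ⟨Q1, Q2⟩
    refine ⟨?_, ?_, ?_⟩
    · intro u v hsum hu
      have h1 := Q1 ((u:ℤ) - m) (by omega)
      have he : -((u:ℤ) - m) - z - 1 = (v:ℤ) - m := by omega
      rw [he, SSx_iff_memB lam u, SSx_iff_memB lam v] at h1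
      exact h1
    · intro u hu hMB
      have h1 := Q1 ((u:ℤ) - m) (by omega)
      have hSSy : SSx (extendL m lam) (-((u:ℤ) - m) - z - 1) :=
        SSx_neg lam _ (by omega)
      rw [SSx_iff_memB lam u] at h1
      exact (h1.mp hMB) hSSy
    · intro u h1 h2
      have hs : m - 1 - u < z := by omega
      have h3 := Q2 (m-1-u) hs
      rw [show (-(((m-1-u : ℕ)) : ℤ) - 1) = (u:ℤ) - m from by omega] at h3
      exact (SSx_iff_memB lam u).mp h3
  · rintro ⟨Pa, Pb, Pc⟩
    constructor
    · intro x hx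
      obtain ⟨u, hu, hum⟩ : ∃ u : ℕ, (u:ℤ) = x + m ∧ m ≤ u :=
        ⟨x.toNat + m, by omega, by omega⟩
      have hiffu : SSx (extendL m lam) x ↔
          (∃ j : Fin m, betaSet m lam j = u) := by
        have h := SSx_iff_memB lam u
        rw [show ((u : ℕ) : ℤ) - (m : ℤ) = x from by omega] at h
        exact h
      by_cases hcase : 2*m ≤ u + z
      · have hnMB := Pb u hcase
        have hSSy : SSx (extendL m lam) (-x - z - 1) := SSx_neg lam _ (by omega)
        exact ⟨fun hA => ((hnMB (hiffu.mp hA)).elim), fun hB => ((hB hSSy).elim)⟩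
      · push_neg at hcase
        have hsum : u + (2*m - z - 1 - u) + z + 1 = 2*m := by omega
        have hpair := Pa u (2*m - z - 1 - u) hsum hum
        have hiffv : SSx (extendL m lam) (-x - z - 1) ↔
            (∃ j : Fin m, betaSet m lam j = 2*m - z - 1 - u) := by
          have h := SSx_iff_memB lam (2*m - z - 1 - u)
          rw [show ((2*m - z - 1 - u : ℕ) : ℤ) - (m : ℤ) = -x - z - 1 from
            by omega] at h
          exact h
        rw [hiffu, hiffv]
        exact hpair
    · intro s hs
      have hMB := Pc (m - 1 - s) (by omega) (by omega)
      have h := (SSx_iff_memB lam (m-1-s)).mpr hMB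
      rwa [show ((m-1-s : ℕ) : ℤ) - (m : ℤ) = -(s:ℤ) - 1 from by omega] at h

/-- A `t`-core `λ` of length at most `tn` is `z`-asymmetric (for `0 ≤ z ≤ t - 2`) iff
`n_i + n_{t-z-1-i} = 2n` for `0 ≤ i ≤ t - z - 1` and `n_i = n` for `t - z ≤ i ≤ t - 1`. -/
theorem zAsymmetric_tcore_iff_ncount
    (t n z : ℕ) (ht : 2 ≤ t) (hn : 1 ≤ n) (hz : z ≤ t - 2)
    (lam : Fin (t * n) → ℕ)
    (hanti : ∀ j k : Fin (t * n), j ≤ k → lam k ≤ lam j)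
    (hcore : IsTCore t (t * n) lam) :
    ZAsym (z : ℤ) (t * n) lam ↔
      ((∀ i ≤ t - z - 1,
          ncount t (t * n) lam i + ncount t (t * n) lam (t - z - 1 - i) = 2 * n) ∧
        ∀ i, t - z ≤ i → i ≤ t - 1 → ncount t (t * n) lam i = n) := by
  classical
  have hz' : z + 2 ≤ t := by omega
  have htn : t ≤ t * n := by
    calc t = t * 1 := (Nat.mul_one t).symm
    _ ≤ t * n := Nat.mul_le_mul_left t hn
  rw [zasym_iff_star hanti z (by linarith)]
  rw [star_iff_Q (extendL_anti hanti) (fun j hj => extendL_zero j hj)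
    (fun j => rank_iff hanti j)]
  rw [Q_iff_Qmem lam (by linarith) (by linarith)]
  exact Qmem_iff_R (MB := fun u => ∃ j : Fin (t*n), betaSet (t*n) lam j = u)
    (nc := ncount t (t*n) lam) ht hz' hn rfl
    (fun i hi k => nc_struct (by omega) (by linarith) lam hanti hcore i hi k)
end

section
/- Let t ≥ 2 and n ≥ 1 be integers and let λ be a t-core of length at most tn. Then the rank of λ equals Σ_{i=0}^{t−1} max(n_i(λ,tn) − n, 0). -/
/-!
Since `λ` is a partition, its beta numbers are distinct, and `β_j ≥ m` exactly when `λ_j ≥ j + 1`;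
as `{j | λ_j ≥ j + 1}` is an initial segment, the rank counts the beta numbers that are `≥ m`.
The `t`-core condition makes the residue class `i` of the beta set closed under subtracting `t`,
so it is the progression `i, i + t, …, i + t (n_i - 1)`, and for `m = t n` exactly `n_i - n` of
its members are `≥ m`.
-/

open BigOperators

open Finset

namespace Finset

theorem eq_range_card_of_isLowerSet {S : Finset ℕ} (hS : IsLowerSet (S : Set ℕ)) :
    S = range #S := by
  obtain hS | ⟨a, hS⟩ := hS.eq_univ_or_Iio
  · exact absurd (hS ▸ S.finite_toSet) Set.infinite_univ
  · obtain rfl : S = range a := by rw [← coe_inj, hS, coe_range]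
    rw [card_range]

theorem sup_add_one_eq_card_of_isLowerSet {S : Finset ℕ} (hS : IsLowerSet (S : Set ℕ)) :
    S.sup (· + 1) = #S := by
  rw [eq_range_card_of_isLowerSet hS, card_range]
  induction #S with
  | zero => rfl
  | succ c ih => rw [range_add_one, sup_insert, ih, sup_eq_left.mpr (Nat.le_succ c)]

theorem card_filter_le_of_isLowerSet {S : Finset ℕ} (hS : IsLowerSet (S : Set ℕ)) (n : ℕ) :
    #{k ∈ S | n ≤ k} = #S - n := by
  rw [eq_range_card_of_isLowerSet hS, card_range, range_eq_Ico, Ico_filter_le, Nat.card_Ico,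
    Nat.zero_max]

theorem isLowerSet_preimage_of_sub_mem {t : ℕ} {B : Finset ℕ}
    (hB : ∀ x ∈ B, t ≤ x → x - t ∈ B) (i : ℕ) :
    IsLowerSet ((t * · + i) ⁻¹' (B : Set ℕ)) := by
  suffices h : ∀ a d, t * (a + d) + i ∈ B → t * a + i ∈ B by
    intro b a hab hb
    exact h a (b - a) (by rwa [Nat.add_sub_cancel' hab])
  intro a d
  induction d with
  | zero => exact id
  | succ d ih =>
    intro hd
    apply ih
    have hsucc : t * (a + (d + 1)) = t * (a + d) + t := by ring
    convert hB _ hd (by omega) using 1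
    omega

theorem card_filter_le_and_mod_eq_of_sub_mem {t : ℕ} (ht : 0 < t) {B : Finset ℕ}
    (hB : ∀ x ∈ B, t ≤ x → x - t ∈ B) {i : ℕ} (hi : i < t) (n : ℕ) :
    #{x ∈ B | t * n ≤ x ∧ x % t = i} = #{x ∈ B | x % t = i} - n := by
  have hf : Function.Injective (t * · + i) := fun a b hab ↦
    Nat.eq_of_mul_eq_mul_left ht (Nat.add_right_cancel hab)
  set K := B.preimage (t * · + i) hf.injOn
  have hclass : {x ∈ B | x % t = i} = K.image (t * · + i) := by
    ext x
    simp only [mem_filter, mem_image, mem_preimage, K]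
    constructor
    · rintro ⟨hx, rfl⟩
      exact ⟨x / t, by rwa [Nat.div_add_mod], Nat.div_add_mod x t⟩
    · rintro ⟨k, hk, rfl⟩
      exact ⟨hk, by simp [Nat.mod_eq_of_lt hi]⟩
  have hK : IsLowerSet (K : Set ℕ) := by
    rw [coe_preimage]
    exact isLowerSet_preimage_of_sub_mem hB i
  calc #{x ∈ B | t * n ≤ x ∧ x % t = i}
      = #{x ∈ {x ∈ B | x % t = i} | t * n ≤ x} := by simp only [filter_filter, and_comm]
    _ = #{k ∈ K | t * n ≤ t * k + i} := by
        rw [hclass, filter_image, card_image_of_injective _ hf]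
    _ = #{k ∈ K | n ≤ k} := by
        congr 1
        refine filter_congr fun k _ ↦ ⟨fun h ↦ ?_, fun h ↦ ?_⟩
        · by_contra! hk
          nlinarith
        · nlinarith
    _ = #{x ∈ B | x % t = i} - n := by
        rw [card_filter_le_of_isLowerSet hK, hclass, card_image_of_injective _ hf]

end Finset

def betaFinset (m : ℕ) (lam : Fin m → ℕ) : Finset ℕ :=
  univ.image (betaSet m lam)

section BetaSet

variable {m : ℕ} {lam : Fin m → ℕ}

theorem betaSet_strictAnti (h : Antitone lam) : StrictAnti (betaSet m lam) := by
  intro j k hjk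
  have := h hjk.le
  have : (j : ℕ) < k := hjk
  have := k.isLt
  unfold betaSet
  omega

theorem card_filter_betaSet (h : Antitone lam) (p : ℕ → Prop) [DecidablePred p] :
    #{j | p (betaSet m lam j)} = #{x ∈ betaFinset m lam | p x} := by
  rw [betaFinset, filter_image, card_image_of_injective _ (betaSet_strictAnti h).injective]

theorem ncount_eq_card_filter (h : Antitone lam) (t i : ℕ) :
    ncount t m lam i = #{x ∈ betaFinset m lam | x % t = i} :=
  card_filter_betaSet h (· % t = i)

theorem IsTCore.sub_mem {t : ℕ} (hcore : IsTCore t m lam) :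
    ∀ x ∈ betaFinset m lam, t ≤ x → x - t ∈ betaFinset m lam := by
  simp only [betaFinset, mem_image, mem_univ, true_and, forall_exists_index]
  rintro _ j rfl hj
  exact hcore j hj

theorem rankP_eq_card_filter (h : Antitone lam) :
    rankP m lam = #{x ∈ betaFinset m lam | m ≤ x} := by
  set F : Finset (Fin m) := {j | (j : ℕ) + 1 ≤ lam j}
  have hF : IsLowerSet ((F.map Fin.valEmbedding : Finset ℕ) : Set ℕ) := by
    intro a b hba ha
    simp only [coe_map, Fin.valEmbedding_apply, Set.mem_image, mem_coe, mem_filter, mem_univ,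
      true_and, F] at ha ⊢
    obtain ⟨j, hj, rfl⟩ := ha
    refine ⟨⟨b, by omega⟩, ?_, rfl⟩
    exact le_trans (by simpa using hba) (hj.trans (h (Fin.le_def.mpr hba)))
  calc rankP m lam = (F.map Fin.valEmbedding).sup (· + 1) := by rw [sup_map]; rfl
    _ = #F := by rw [sup_add_one_eq_card_of_isLowerSet hF, card_map]
    _ = #{j | m ≤ betaSet m lam j} := by
        congr 1
        refine filter_congr fun j _ ↦ ?_
        have := j.isLt
        unfold betaSet
        omega
    _ = #{x ∈ betaFinset m lam | m ≤ x} := card_filter_betaSet h _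

end BetaSet

theorem rank_tcore_eq_sum_general
    (t n : ℕ) (ht : 2 ≤ t)
    (lam : Fin (t * n) → ℕ)
    (hanti : ∀ j k : Fin (t * n), j ≤ k → lam k ≤ lam j)
    (hcore : IsTCore t (t * n) lam) :
    rankP (t * n) lam = ∑ i ∈ Finset.range t, (ncount t (t * n) lam i - n) := by
  have ht₀ : 0 < t := by omega
  rw [rankP_eq_card_filter hanti,
    card_eq_sum_card_fiberwise fun x _ ↦ mem_range.mpr (Nat.mod_lt x ht₀)]
  refine sum_congr rfl fun i hi ↦ ?_
  rw [filter_filter, ncount_eq_card_filter hanti,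
    card_filter_le_and_mod_eq_of_sub_mem ht₀ hcore.sub_mem (mem_range.mp hi)]

/-- If `λ` is a `t`-core of length at most `tn`, then
`rank(λ) = Σ_{i=0}^{t-1} (n_i(λ, tn) - n)_+` (truncated subtraction). -/
theorem rank_tcore_eq_sum
    (t n : ℕ) (ht : 2 ≤ t) (hn : 1 ≤ n)
    (lam : Fin (t * n) → ℕ)
    (hanti : ∀ j k : Fin (t * n), j ≤ k → lam k ≤ lam j)
    (hcore : IsTCore t (t * n) lam) :
    rankP (t * n) lam = ∑ i ∈ Finset.range t, (ncount t (t * n) lam i - n) :=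
  rank_tcore_eq_sum_general t n ht lam hanti hcore
end
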